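/- arXiv:2002.06713 — 3 statements merged into one kernel-verified Lean document; each statement's English description precedes it below -/
import Mathlib

section
/- (AMOUN single-recipient decryption correctness) Let k, p, q, v be primes with v < k, let y, y⁻¹ be positive integers less than v with y·y⁻¹ ≡ 1 (mod v). Let N = k·p, e = k·q + y⁻¹, d = v^k mod N. Let f, t, r be natural numbers and set N' = N·f + d·t and e' = e + N'·r. Let m be a natural number with m·(y⁻¹ + v·t·r) < k and m < v. Then ((m·e' mod k)·y) mod v = m. -/
theorem stmt_8 (k p q v : ℕ) (hk : Nat.Prime k) (hp : Nat.Prime p)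
    (hq : Nat.Prime q) (hv : Nat.Prime v) (hvk : v < k)
    (y yinv : ℕ) (hy : 0 < y) (hyv : y < v) (hyinv : 0 < yinv) (hyinvv : yinv < v)
    (hinv : y * yinv ≡ 1 [MOD v])
    (N e d : ℕ) (hN : N = k * p) (he : e = k * q + yinv) (hd : d = v ^ k % N)
    (f t r : ℕ) (N' e' : ℕ) (hN' : N' = N * f + d * t) (he' : e' = e + N' * r)
    (m : ℕ) (hm : m * (yinv + v * t * r) < k) (hmv : m < v) :
    ((m * e' % k) * y) % v = m := by
  haveI : Fact k.Prime := ⟨hk⟩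
  have hkN : k ∣ N := ⟨p, hN⟩
  have fermat : v ^ k ≡ v [MOD k] := by
    have h := ZMod.pow_card (v : ZMod k)
    have := (ZMod.natCast_eq_natCast_iff (v ^ k) v k).mpr
    apply (ZMod.natCast_eq_natCast_iff (v ^ k) v k).mp
    push_cast
    exact h
  have hd' : d ≡ v [MOD k] := by
    rw [hd]
    exact ((Nat.mod_modEq (v ^ k) N).of_dvd hkN).trans fermat
  have hdz : (d : ZMod k) = (v : ZMod k) :=
    (ZMod.natCast_eq_natCast_iff _ _ _).mpr hd'
  have hE : e' ≡ yinv + v * t * r [MOD k] := by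
    apply (ZMod.natCast_eq_natCast_iff _ _ _).mp
    subst he' he hN' hN
    push_cast
    rw [hdz, ZMod.natCast_self]
    ring
  have h1 : m * e' % k = m * (yinv + v * t * r) := by
    rw [(hE.mul_left m : m * e' % k = m * (yinv + v * t * r) % k),
      Nat.mod_eq_of_lt hm]
  rw [h1]
  have h2 : m * (yinv + v * t * r) * y ≡ m [MOD v] := by
    calc m * (yinv + v * t * r) * y
        ≡ m * (yinv + 0 * t * r) * y [MOD v] := by
          exact (((Nat.ModEq.refl yinv).add
            (((Nat.modEq_zero_iff_dvd.mpr (dvd_refl v)).mul_right t).mul_right r)).mul_left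
            m).mul_right y
      _ = m * (y * yinv) := by ring
      _ ≡ m * 1 [MOD v] := hinv.mul_left m
      _ = m := by ring
  rw [(h2 : m * (yinv + v * t * r) * y % v = m % v), Nat.mod_eq_of_lt hmv]
end

section
/- (AMOUN full decryption correctness) Let there be n recipients with pairwise coprime moduli N_i = k_i·p_i (k_i, p_i prime), X = ∏ N_i, and A_i·(X/N_i) ≡ 1 (mod N_i). For recipient i, with private key (k_i, v_i, y_i) and parameters e'_i = e_i + N'_i·r_i as in AMOUN, where e_i = k_i·q_i + y_i⁻¹, N'_i = N_i·f_i + d_i·t_i, d_i = v_i^{k_i} mod N_i, y_i·y_i⁻¹ ≡ 1 (mod v_i), and messages m_j satisfying m_i·(y_i⁻¹ + v_i·t_i·r_i) < k_i and m_i < v_i, set C = (∑_{j=1}^{n} m_j·e'_j·A_j·(X/N_j)) mod X. Then ((C mod k_i)·y_i) mod v_i = m_i. -/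
theorem stmt_9 (n : ℕ) (hn : 1 < n)
    (k p q v : Fin n → ℕ)
    (hk : ∀ i, Nat.Prime (k i)) (hp : ∀ i, Nat.Prime (p i))
    (hq : ∀ i, Nat.Prime (q i)) (hv : ∀ i, Nat.Prime (v i))
    (hvk : ∀ i, v i < k i)
    (y yinv : Fin n → ℕ)
    (hy : ∀ i, 0 < y i) (hyv : ∀ i, y i < v i)
    (hyinv : ∀ i, 0 < yinv i) (hyinvv : ∀ i, yinv i < v i)
    (hinv : ∀ i, y i * yinv i ≡ 1 [MOD v i])
    (N : Fin n → ℕ) (hN : ∀ i, N i = k i * p i)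
    (hcop : ∀ i j, i ≠ j → Nat.Coprime (N i) (N j))
    (X : ℕ) (hX : X = ∏ i, N i)
    (A : Fin n → ℤ) (hA : ∀ i, A i * ((X / N i : ℕ) : ℤ) ≡ 1 [ZMOD (N i : ℤ)])
    (e d : Fin n → ℕ) (he : ∀ i, e i = k i * q i + yinv i)
    (hd : ∀ i, d i = v i ^ (k i) % N i)
    (f t r : Fin n → ℕ)
    (N' e' : Fin n → ℕ)
    (hN' : ∀ i, N' i = N i * f i + d i * t i)
    (he' : ∀ i, e' i = e i + N' i * r i)
    (m : Fin n → ℕ)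
    (hm : ∀ i, m i * (yinv i + v i * t i * r i) < k i)
    (hmv : ∀ i, m i < v i)
    (C : ℤ) (hC : C = (∑ j, (m j : ℤ) * (e' j : ℤ) * A j * ((X / N j : ℕ) : ℤ)) % (X : ℤ))
    (i : Fin n) :
    ((C % (k i : ℤ)) * (y i : ℤ)) % (v i : ℤ) = (m i : ℤ) := by
  have hNpos : ∀ j, 0 < N j := fun j => by
    rw [hN j]; exact Nat.mul_pos (hk j).pos (hp j).pos
  have hXpos : 0 < X := by
    rw [hX]; exact Finset.prod_pos (fun j _ => hNpos j)
  have hNdvdX : ∀ j, (N j : ℤ) ∣ (X : ℤ) := fun j => by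
    exact_mod_cast Int.natCast_dvd_natCast.mpr
      (hX ▸ Finset.dvd_prod_of_mem N (Finset.mem_univ j))
  have hdiv : ∀ j, (X / N j : ℕ) = ∏ l ∈ Finset.univ.erase j, N l := fun j => by
    rw [hX, ← Finset.prod_erase_mul Finset.univ N (Finset.mem_univ j)]
    exact Nat.mul_div_cancel _ (hNpos j)
  have hNi_dvd : ∀ j, j ≠ i → (N i : ℤ) ∣ ((X / N j : ℕ) : ℤ) := fun j hj => by
    rw [hdiv j]
    exact_mod_cast Int.natCast_dvd_natCast.mpr
      (Finset.dvd_prod_of_mem N (Finset.mem_erase.mpr ⟨hj.symm, Finset.mem_univ i⟩))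
  -- C ≡ m i * e' i mod N i
  have hCS : C ≡ (∑ j, (m j : ℤ) * (e' j : ℤ) * A j * ((X / N j : ℕ) : ℤ)) [ZMOD (N i : ℤ)] := by
    rw [hC]
    exact Int.emod_emod_of_dvd _ (hNdvdX i)
  have hSum : (∑ j, (m j : ℤ) * (e' j : ℤ) * A j * ((X / N j : ℕ) : ℤ))
      ≡ (m i : ℤ) * (e' i : ℤ) [ZMOD (N i : ℤ)] := by
    rw [← Finset.add_sum_erase _ _ (Finset.mem_univ i)]
    have h1 : (∑ j ∈ Finset.univ.erase i, (m j : ℤ) * (e' j : ℤ) * A j * ((X / N j : ℕ) : ℤ))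
        ≡ 0 [ZMOD (N i : ℤ)] := by
      refine (Int.modEq_zero_iff_dvd).mpr (Finset.dvd_sum fun j hj => ?_)
      exact Dvd.dvd.mul_left (hNi_dvd j (Finset.mem_erase.mp hj).1) _
    have h2 : (m i : ℤ) * (e' i : ℤ) * A i * ((X / N i : ℕ) : ℤ)
        ≡ (m i : ℤ) * (e' i : ℤ) [ZMOD (N i : ℤ)] := by
      calc (m i : ℤ) * (e' i : ℤ) * A i * ((X / N i : ℕ) : ℤ)
          = (m i : ℤ) * (e' i : ℤ) * (A i * ((X / N i : ℕ) : ℤ)) := by ring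
        _ ≡ (m i : ℤ) * (e' i : ℤ) * 1 [ZMOD (N i : ℤ)] := (hA i).mul_left _
        _ = (m i : ℤ) * (e' i : ℤ) := by ring
    simpa using h2.add h1
  have hCN : C ≡ (m i : ℤ) * (e' i : ℤ) [ZMOD (N i : ℤ)] := hCS.trans hSum
  have hkdvdN : (k i : ℤ) ∣ (N i : ℤ) := by
    exact_mod_cast Int.natCast_dvd_natCast.mpr (hN i ▸ dvd_mul_right (k i) (p i))
  have hCk : C ≡ (m i : ℤ) * (e' i : ℤ) [ZMOD (k i : ℤ)] := hCN.of_dvd hkdvdN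
  -- d i ≡ v i mod k i
  haveI : Fact (Nat.Prime (k i)) := ⟨hk i⟩
  have hdk : d i ≡ v i [MOD k i] := by
    have h1 : d i ≡ v i ^ k i [MOD k i] := by
      rw [hd i]
      exact (Nat.mod_modEq _ _).of_dvd (hN i ▸ dvd_mul_right (k i) (p i))
    refine h1.trans ?_
    rw [← ZMod.natCast_eq_natCast_iff]
    push_cast
    exact ZMod.pow_card _
  -- e' i ≡ yinv i + v i * t i * r i mod k i
  have he'k : e' i ≡ yinv i + v i * t i * r i [MOD k i] := by
    rw [← ZMod.natCast_eq_natCast_iff]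
    have hdz : ((d i : ℕ) : ZMod (k i)) = (v i : ZMod (k i)) :=
      (ZMod.natCast_eq_natCast_iff _ _ _).mpr hdk
    rw [he' i, he i, hN' i, hN i]
    push_cast
    rw [hdz, ZMod.natCast_self]
    ring
  have hCk2 : C ≡ (m i : ℤ) * ((yinv i : ℤ) + (v i : ℤ) * (t i) * (r i)) [ZMOD (k i : ℤ)] := by
    refine hCk.trans ?_
    have := (Int.natCast_modEq_iff.mpr he'k).mul_left (m i : ℤ)
    convert this using 2 <;> push_cast <;> ring
  -- compute C % k i exactly
  have hTlt : (m i : ℤ) * ((yinv i : ℤ) + (v i : ℤ) * (t i) * (r i)) < (k i : ℤ) := by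
    exact_mod_cast (by push_cast; exact_mod_cast hm i :
      ((m i * (yinv i + v i * t i * r i) : ℕ) : ℤ) < (k i : ℤ))
  have hTnonneg : 0 ≤ (m i : ℤ) * ((yinv i : ℤ) + (v i : ℤ) * (t i) * (r i)) := by positivity
  have hCmod : C % (k i : ℤ) = (m i : ℤ) * ((yinv i : ℤ) + (v i : ℤ) * (t i) * (r i)) := by
    have := hCk2
    unfold Int.ModEq at this
    rw [this, Int.emod_eq_of_lt hTnonneg hTlt]
  rw [hCmod]
  -- final reduction mod v i
  have hyv' : ((y i : ℤ) * (yinv i : ℤ)) ≡ 1 [ZMOD (v i : ℤ)] := by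
    exact_mod_cast Int.natCast_modEq_iff.mpr (hinv i)
  have hfin : ((m i : ℤ) * ((yinv i : ℤ) + (v i : ℤ) * (t i) * (r i))) * (y i : ℤ)
      ≡ (m i : ℤ) [ZMOD (v i : ℤ)] := by
    calc ((m i : ℤ) * ((yinv i : ℤ) + (v i : ℤ) * (t i) * (r i))) * (y i : ℤ)
        = (m i : ℤ) * ((y i : ℤ) * (yinv i : ℤ)) + (v i : ℤ) * ((m i : ℤ) * (t i) * (r i) * (y i)) := by
          ring
      _ ≡ (m i : ℤ) * 1 + 0 [ZMOD (v i : ℤ)] := by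
          refine (hyv'.mul_left _).add ?_
          exact (Int.modEq_zero_iff_dvd).mpr (dvd_mul_right _ _)
      _ = (m i : ℤ) := by ring
  have : ((m i : ℤ) * ((yinv i : ℤ) + (v i : ℤ) * (t i) * (r i))) * (y i : ℤ) % (v i : ℤ)
      = (m i : ℤ) % (v i : ℤ) := hfin
  rw [this, Int.emod_eq_of_lt (by positivity) (by exact_mod_cast hmv i)]
end

section
/- (Distinct ciphertexts for distinct coins) In the AMOUN setting with one recipient of index i: let k_i be prime, m_i, t_i, v_i positive integers less than k_i, d_i ≡ v_i^{k_i} (mod N_i) with N_i = k_i·p_i (p_i prime, p_i ≠ k_i), N'_i = N_i·f_i + d_i·t_i, and coins r_i ≠ r''_i with r_i, r''_i < k_i. If gcd(v_i, k_i) = 1 (e.g., v_i prime, v_i < k_i), then m_i·N'_i·(r_i − r''_i) ≢ 0 (mod N_i); in particular the two sub-ciphertexts m_i·(e_i + N'_i·r_i) and m_i·(e_i + N'_i·r''_i) differ modulo N_i. -/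
theorem stmt_14 (k p : ℕ) (hk : Nat.Prime k) (hp : Nat.Prime p) (hpk : p ≠ k)
    (m t v : ℕ) (hm : 0 < m) (hmk : m < k) (ht : 0 < t) (htk : t < k)
    (hvpos : 0 < v) (hvk : v < k) (hcopv : Nat.gcd v k = 1)
    (N : ℕ) (hN : N = k * p)
    (d : ℕ) (hd : d ≡ v ^ k [MOD N])
    (f : ℕ) (N' : ℕ) (hN' : N' = N * f + d * t)
    (r r'' : ℕ) (hrne : r ≠ r'') (hrk : r < k) (hr''k : r'' < k)
    (e : ℤ) :
    ¬ ((m : ℤ) * (N' : ℤ) * ((r : ℤ) - (r'' : ℤ)) ≡ 0 [ZMOD (N : ℤ)]) ∧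
    ¬ ((m : ℤ) * (e + (N' : ℤ) * (r : ℤ)) ≡ (m : ℤ) * (e + (N' : ℤ) * (r'' : ℤ)) [ZMOD (N : ℤ)]) := by
  haveI : Fact (Nat.Prime k) := ⟨hk⟩
  have key : ¬ ((m : ℤ) * (N' : ℤ) * ((r : ℤ) - (r'' : ℤ)) ≡ 0 [ZMOD (N : ℤ)]) := by
    intro h
    have hdvdN : ((N : ℤ)) ∣ (m : ℤ) * (N' : ℤ) * ((r : ℤ) - (r'' : ℤ)) :=
      Int.modEq_zero_iff_dvd.mp h
    have hkN : (k : ℤ) ∣ (N : ℤ) := Int.natCast_dvd_natCast.mpr ⟨p, hN⟩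
    have hkdvd : (k : ℤ) ∣ (m : ℤ) * (N' : ℤ) * ((r : ℤ) - (r'' : ℤ)) := hkN.trans hdvdN
    have hz : ((((m : ℤ) * (N' : ℤ) * ((r : ℤ) - (r'' : ℤ))) : ℤ) : ZMod k) = 0 :=
      (ZMod.intCast_zmod_eq_zero_iff_dvd _ k).2 hkdvd
    push_cast at hz
    have hm0 : (m : ZMod k) ≠ 0 := by
      rw [Ne, ZMod.natCast_eq_zero_iff]
      exact fun hdvd => absurd (Nat.le_of_dvd hm hdvd) (not_le.2 hmk)
    have ht0 : (t : ZMod k) ≠ 0 := by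
      rw [Ne, ZMod.natCast_eq_zero_iff]
      exact fun hdvd => absurd (Nat.le_of_dvd ht hdvd) (not_le.2 htk)
    have hv0 : (v : ZMod k) ≠ 0 := by
      rw [Ne, ZMod.natCast_eq_zero_iff]
      exact fun hdvd => absurd (Nat.le_of_dvd hvpos hdvd) (not_le.2 hvk)
    have hN0 : (N : ZMod k) = 0 := by
      rw [hN]; push_cast; simp [ZMod.natCast_self]
    have hdmod : (d : ZMod k) = (v : ZMod k) ^ k := by
      have hk' : k ∣ N := ⟨p, hN⟩
      have : d ≡ v ^ k [MOD k] := Nat.ModEq.of_dvd hk' hd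
      calc (d : ZMod k) = ((v ^ k : ℕ) : ZMod k) := by
            exact_mod_cast (ZMod.natCast_eq_natCast_iff _ _ _).mpr ‹d ≡ v ^ k [MOD k]›
        _ = (v : ZMod k) ^ k := by push_cast; ring
    have hN'0 : ((N' : ℕ) : ZMod k) ≠ 0 := by
      rw [hN']
      push_cast
      rw [hN0, hdmod, ZMod.pow_card]
      simpa using mul_ne_zero hv0 ht0
    have hr0 : ((r : ZMod k) - (r'' : ZMod k)) ≠ 0 := by
      rw [sub_ne_zero]
      intro hcast
      apply hrne
      have := (ZMod.natCast_eq_natCast_iff' r r'' k).mp hcast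
      rwa [Nat.mod_eq_of_lt hrk, Nat.mod_eq_of_lt hr''k] at this
    exact (mul_ne_zero (mul_ne_zero hm0 hN'0) hr0) hz
  refine ⟨key, fun h => key ?_⟩
  have h2 : (m : ℤ) * (e + (N' : ℤ) * (r : ℤ)) - (m : ℤ) * (e + (N' : ℤ) * (r'' : ℤ)) ≡ 0 [ZMOD (N : ℤ)] := by
    simpa using h.sub (Int.ModEq.refl ((m : ℤ) * (e + (N' : ℤ) * (r'' : ℤ))))
  calc (m : ℤ) * (N' : ℤ) * ((r : ℤ) - (r'' : ℤ))
      = (m : ℤ) * (e + (N' : ℤ) * (r : ℤ)) - (m : ℤ) * (e + (N' : ℤ) * (r'' : ℤ)) := by ring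
    _ ≡ 0 [ZMOD (N : ℤ)] := h2
end
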